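/- arXiv:2405.08103 — 3 statements merged into one kernel-verified Lean document; each statement's English description precedes it below -/
import Mathlib

section
/- Let n ≥ 1 and let V be an n × n integer matrix such that det(V − Vᵀ) = 1 or det(V − Vᵀ) = −1. If q is a nonzero rational number such that det(V − q·Vᵀ) = 0 (the determinant taken over ℚ, viewing V as a rational matrix), then there exists an integer a with a ≠ 0 and a ≠ 1 such that q = (a − 1)/a; in particular q > 0. -/
/-!
Put `P(t) = det(V - t Vᵀ) ∈ ℤ[t]`. Then `P(1) = det(V - Vᵀ) = ±1`, so `P(t + 1)` has constant
term `±1`, and by the rational root theorem the numerator of the root `q - 1` of `P(t + 1)` is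
`±1`. Hence `q = 1 - 1/a` for a nonzero integer `a`, and `a ≠ 1` because `q ≠ 0`.
-/

open Matrix Polynomial

namespace Matrix

variable {R n : Type*} [CommRing R] [Fintype n] [DecidableEq n]

noncomputable def seifertPoly (V : Matrix n n R) : R[X] :=
  (V.map C - (X : R[X]) • Vᵀ.map C).det

theorem aeval_seifertPoly {A : Type*} [CommRing A] [Algebra R A] (V : Matrix n n R) (s : A) :
    aeval s V.seifertPoly = (V.map (algebraMap R A) - s • (V.map (algebraMap R A))ᵀ).det := by
  rw [seifertPoly, AlgHom.map_det, AlgHom.mapMatrix_apply]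
  congr 1
  ext i j
  simp only [map_apply, sub_apply, smul_apply, transpose_apply, map_sub, smul_eq_mul, map_mul,
    aeval_C, aeval_X]

theorem eval_one_seifertPoly (V : Matrix n n R) : V.seifertPoly.eval 1 = (V - Vᵀ).det := by
  simpa using aeval_seifertPoly V (1 : R)

end Matrix

namespace Rat

theorem num_dvd_coeff_zero_of_aeval_eq_zero {p : ℤ[X]} {r : ℚ} (hr : aeval r p = 0) :
    r.num ∣ p.coeff 0 :=
  (isFractionRingNum r).symm.dvd.trans (num_dvd_of_is_root hr)

theorem num_sub_one_dvd_eval_one {p : ℤ[X]} {r : ℚ} (hr : aeval r p = 0) :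
    (r - 1).num ∣ p.eval 1 := by
  have hshift : aeval (r - 1) (p.comp (X + 1)) = 0 := by simpa [aeval_comp] using hr
  simpa [coeff_zero_eq_eval_zero, eval_comp] using num_dvd_coeff_zero_of_aeval_eq_zero hshift

theorem inv_eq_intCast_of_isUnit_num {x : ℚ} (hx : IsUnit x.num) :
    x⁻¹ = ((x.num * x.den : ℤ) : ℚ) := by
  nth_rw 1 [← num_div_den x]
  rcases Int.isUnit_iff.mp hx with h | h <;> simp [h, div_neg]

theorem exists_eq_sub_one_div_of_aeval_eq_zero {p : ℤ[X]} (hp : IsUnit (p.eval 1)) {r : ℚ}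
    (hr : aeval r p = 0) : ∃ a : ℤ, a ≠ 0 ∧ r = ((a : ℚ) - 1) / a := by
  have hnum : IsUnit (r - 1).num := isUnit_of_dvd_unit (num_sub_one_dvd_eval_one hr) hp
  set b := (r - 1).num * (r - 1).den
  have hr : r - 1 = (b : ℚ)⁻¹ := by rw [← inv_eq_intCast_of_isUnit_num hnum, inv_inv]
  have hb : (b : ℚ) ≠ 0 := by simpa [hr] using num_ne_zero.mp hnum.ne_zero
  refine ⟨-b, by exact_mod_cast neg_ne_zero.mpr hb, ?_⟩
  push_cast
  field_simp at hr ⊢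
  linarith

end Rat

theorem Int.sub_one_div_self_pos {K : Type*} [Field K] [LinearOrder K] [IsStrictOrderedRing K]
    {a : ℤ} (h0 : a ≠ 0) (h1 : a ≠ 1) : 0 < ((a : K) - 1) / a := by
  rcases lt_or_gt_of_ne h0 with hneg | hpos
  · have : (a : K) < 0 := by exact_mod_cast hneg
    exact div_pos_of_neg_of_neg (by linarith) this
  · have : (2 : K) ≤ a := by exact_mod_cast (show 2 ≤ a by omega)
    exact div_pos (by linarith) (by linarith)

theorem rational_root_of_seifert_form_general (n : ℕ)
    (V : Matrix (Fin n) (Fin n) ℤ)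
    (hV : (V - Vᵀ).det = 1 ∨ (V - Vᵀ).det = -1)
    (q : ℚ) (hq : q ≠ 0)
    (hroot : (V.map ((↑) : ℤ → ℚ) - q • (V.map ((↑) : ℤ → ℚ))ᵀ).det = 0) :
    ∃ a : ℤ, a ≠ 0 ∧ a ≠ 1 ∧ q = ((a : ℚ) - 1) / (a : ℚ) ∧ 0 < q := by
  have hunit : IsUnit (V.seifertPoly.eval 1) := by
    rw [eval_one_seifertPoly]
    exact Int.isUnit_iff.mpr hV
  have hq_root : aeval q V.seifertPoly = 0 := by
    rwa [aeval_seifertPoly, algebraMap_int_eq, Int.coe_castRingHom]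
  obtain ⟨a, ha0, rfl⟩ := Rat.exists_eq_sub_one_div_of_aeval_eq_zero hunit hq_root
  have ha1 : a ≠ 1 := by
    rintro rfl
    simp at hq
  exact ⟨a, ha0, ha1, rfl, Int.sub_one_div_self_pos ha0 ha1⟩

/-- Algebraic content of Proposition 5.1: a nonzero rational root `q` of
`det(V - t Vᵀ)` (for an integer matrix `V` with `det(V - Vᵀ) = ±1`, the
algebraic model of a Seifert matrix) has the form `(a - 1)/a` for an
integer `a ∉ {0, 1}`; in particular `q > 0`. -/
theorem rational_root_of_seifert_form (n : ℕ) (hn : 1 ≤ n)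
    (V : Matrix (Fin n) (Fin n) ℤ)
    (hV : (V - Vᵀ).det = 1 ∨ (V - Vᵀ).det = -1)
    (q : ℚ) (hq : q ≠ 0)
    (hroot : (V.map ((↑) : ℤ → ℚ) - q • (V.map ((↑) : ℤ → ℚ))ᵀ).det = 0) :
    ∃ a : ℤ, a ≠ 0 ∧ a ≠ 1 ∧ q = ((a : ℚ) - 1) / (a : ℚ) ∧ 0 < q :=
  rational_root_of_seifert_form_general n V hV q hq hroot
end

section
/- Let n ≥ 1 and let V be an n × n integer matrix with det(V − Vᵀ) = 1. Suppose there exists a polynomial ∇ with integer coefficients, all of whose coefficients are nonnegative, such that for every nonzero real number x one has det(x·V − x⁻¹·Vᵀ) = ∇(x − x⁻¹) (determinants of real matrices, with V regarded as a real matrix). Then there is no nonzero rational number q with det(V − q·Vᵀ) = 0. -/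
/-
Since `det (V - Vᵀ) = 1`, the skew-symmetric matrix `V - Vᵀ` has even size `n = 2m`, so
`x ↦ det (x V - x⁻¹ Vᵀ)` is even and `∇ (y) = P (y²)` for the integer polynomial
`P = contract 2 ∇`, with `P (0) = ∇ (0) = det (V - Vᵀ) = 1`. Substituting `t = x⁻²` gives
`det (V - t Vᵀ) = t ^ m P ((t - 1)² / t)` for real `t > 0`; after clearing denominators this is
an identity in `ℤ[X]`, so it holds at every rational `q ≠ 0`. A rational root `q` therefore gives
a root `w = (q - 1)² / q` of `P`. If `q > 0` then `w ≥ 0` and `P (w) ≥ P (0) = 1` because the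
coefficients are nonnegative. If `q < 0` then `w ≤ -4`, while the rational root theorem forces
`|w| ≤ 1` because `P (0) = 1`.
-/

open Matrix Polynomial

namespace Polynomial

theorem expand_contract_two_of_even {K : Type*} [CommRing K] [IsDomain K] [Infinite K]
    [CharZero K] {p : K[X]} (hp : Function.Even fun y ↦ p.eval y) :
    expand K 2 (contract 2 p) = p := by
  have hcomp : p.comp (C (-1) * X) = p := Polynomial.funext fun y ↦ by simpa using hp y
  ext j
  rw [coeff_expand two_pos, coeff_contract two_ne_zero]
  split_ifs with hj
  · rw [Nat.div_mul_cancel hj]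
  · have hodd : Odd j := Nat.odd_iff.mpr (Nat.two_dvd_ne_zero.mp hj)
    have hcoeff := congrArg (coeff · j) hcomp
    simp only [comp_C_mul_X_coeff, hodd.neg_one_pow, mul_neg_one] at hcoeff
    exact (CharZero.neg_eq_self_iff.mp hcoeff).symm

theorem aeval_homogenize {R K : Type*} [CommRing R] [Field K] [Algebra R K] {p : R[X]} {n : ℕ}
    (hn : p.natDegree ≤ n) (x : Fin 2 → K) (hx : x 1 ≠ 0) :
    MvPolynomial.aeval x (p.homogenize n) = aeval (x 0 / x 1) p * x 1 ^ n := by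
  rw [MvPolynomial.aeval_def, ← MvPolynomial.eval_map, ← homogenize_map,
    eval_homogenize (natDegree_map_le.trans hn) x hx, eval_map, aeval_def]

theorem aeval_aeval_homogenize {R K : Type*} [CommRing R] [Field K] [Algebra R K] {p : R[X]}
    {n : ℕ} (hn : p.natDegree ≤ n) (f g : R[X]) {t : K} (ht : aeval t g ≠ 0) :
    aeval t (MvPolynomial.aeval ![f, g] (p.homogenize n)) =
      aeval (aeval t f / aeval t g) p * aeval t g ^ n := by
  rw [MvPolynomial.comp_aeval_apply, aeval_homogenize hn _ (by simpa using ht)]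
  simp

theorem eq_of_forall_pos_aeval_eq {p q : ℤ[X]} (h : ∀ t : ℝ, 0 < t → aeval t p = aeval t q) :
    p = q := by
  refine map_injective (Int.castRingHom ℝ) Int.cast_injective
    (eq_of_infinite_eval_eq _ _ ((Set.Ioi_infinite 0).mono fun t ht ↦ ?_))
  simpa [eval_map, aeval_def, algebraMap_int_eq] using h t ht

theorem one_le_aeval_of_coeff_nonneg {K : Type*} [CommRing K] [LinearOrder K]
    [IsStrictOrderedRing K] {p : ℤ[X]} (hp : ∀ i, 0 ≤ p.coeff i) (hp0 : p.coeff 0 = 1) {w : K}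
    (hw : 0 ≤ w) : 1 ≤ aeval w p := by
  rw [aeval_eq_sum_range]
  have hterm := Finset.single_le_sum (f := fun i ↦ p.coeff i • w ^ i)
    (fun i _ ↦ smul_nonneg (hp i) (pow_nonneg hw i)) (Finset.mem_range.mpr p.natDegree.succ_pos)
  simpa [hp0] using hterm

theorem abs_le_one_of_aeval_eq_zero_of_isUnit_coeff_zero {p : ℤ[X]} (hp0 : IsUnit (p.coeff 0))
    {w : ℚ} (hw : aeval w p = 0) : |w| ≤ 1 := by
  have hnum : IsUnit w.num := isUnit_of_dvd_unit
    ((Rat.isFractionRingNum w).dvd_iff_dvd_left.mp (num_dvd_of_is_root hw)) hp0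
  have habs : |(w.num : ℚ)| = 1 := mod_cast Int.isUnit_iff_abs_eq.mp hnum
  rw [← Rat.num_div_den w, abs_div, habs, Nat.abs_cast]
  exact div_le_one_of_le₀ (mod_cast w.den_pos) (Nat.cast_nonneg _)

end Polynomial

theorem exists_ne_zero_sub_inv_eq (y : ℝ) : ∃ x : ℝ, x ≠ 0 ∧ x - x⁻¹ = y := by
  obtain ⟨x, hx⟩ := exists_quadratic_eq_zero (b := -y) (c := -1) one_ne_zero
    ⟨√(y ^ 2 + 4), by rw [discrim, Real.mul_self_sqrt (by positivity)]; ring⟩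
  have hx0 : x ≠ 0 := by rintro rfl; norm_num at hx
  exact ⟨x, hx0, by field_simp; linear_combination hx⟩

namespace Matrix

variable {ι : Type*} [Fintype ι] [DecidableEq ι]

theorem det_eq_zero_of_transpose_eq_neg {R : Type*} [CommRing R] [NoZeroDivisors R] [CharZero R]
    {A : Matrix ι ι R} (hA : Aᵀ = -A) (hι : Odd (Fintype.card ι)) : A.det = 0 := by
  have h := A.det_transpose
  rwa [hA, det_neg, hι.neg_one_pow, neg_one_mul, CharZero.neg_eq_self_iff] at h

theorem even_card_of_det_sub_transpose_ne_zero {R : Type*} [CommRing R] [NoZeroDivisors R]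
    [CharZero R] {A : Matrix ι ι R} (hA : (A - Aᵀ).det ≠ 0) : Even (Fintype.card ι) := by
  by_contra hι
  exact hA (det_eq_zero_of_transpose_eq_neg (by simp) (Nat.not_even_iff_odd.mp hι))

theorem det_smul_sub_inv_smul_transpose {K : Type*} [Field K] (A : Matrix ι ι K) {x t : K}
    (hxt : x ^ 2 * t = 1) :
    (x • A - x⁻¹ • Aᵀ).det = x ^ Fintype.card ι * (A - t • Aᵀ).det := by
  have hx : x ≠ 0 := by rintro rfl; simp at hxt
  rw [← det_smul, smul_sub, smul_smul, show x * t = x⁻¹ by field_simp; linear_combination hxt]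

end Matrix

section Conway

variable {ι : Type*} [Fintype ι] [DecidableEq ι]

noncomputable def alexanderPoly (V : Matrix ι ι ℤ) : ℤ[X] :=
  (V.map C - (X : ℤ[X]) • (V.map C)ᵀ).det

theorem aeval_alexanderPoly {K : Type*} [CommRing K] (V : Matrix ι ι ℤ) (t : K) :
    aeval t (alexanderPoly V) = (V.map ((↑) : ℤ → K) - t • (V.map ((↑) : ℤ → K))ᵀ).det := by
  rw [alexanderPoly, AlgHom.map_det]
  congr 1
  ext i j
  simp

def IsConwayPoly (V : Matrix ι ι ℤ) (c : ℤ[X]) : Prop :=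
  ∀ x : ℝ, x ≠ 0 →
    (x • V.map ((↑) : ℤ → ℝ) - x⁻¹ • (V.map ((↑) : ℤ → ℝ))ᵀ).det = aeval (x - x⁻¹) c

namespace IsConwayPoly

variable {V : Matrix ι ι ℤ} {c : ℤ[X]} (h : IsConwayPoly V c)
include h

theorem coeff_zero : c.coeff 0 = (V - Vᵀ).det := by
  have h1 := h 1 one_ne_zero
  rw [inv_one, one_smul, one_smul, sub_self, ← coeff_zero_eq_aeval_zero', ← Matrix.transpose_map,
    ← Matrix.map_sub _ Int.cast_sub, ← Int.cast_det, algebraMap_int_eq, eq_intCast] at h1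
  exact_mod_cast h1.symm

theorem even (hι : Even (Fintype.card ι)) : Function.Even fun y : ℝ ↦ aeval y c := by
  intro y
  obtain ⟨x, hx, rfl⟩ := exists_ne_zero_sub_inv_eq y
  have hneg : (-x) • V.map ((↑) : ℤ → ℝ) - (-x)⁻¹ • (V.map ((↑) : ℤ → ℝ))ᵀ
      = -(x • V.map ((↑) : ℤ → ℝ) - x⁻¹ • (V.map ((↑) : ℤ → ℝ))ᵀ) := by
    rw [inv_neg, neg_smul, neg_smul]
    abel
  show aeval (-(x - x⁻¹)) c = aeval (x - x⁻¹) c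
  rw [← h x hx, show -(x - x⁻¹) = -x - (-x)⁻¹ by rw [inv_neg]; ring,
    ← h (-x) (neg_ne_zero.mpr hx), hneg, Matrix.det_neg, hι.neg_one_pow, one_mul]

theorem expand_contract (hι : Even (Fintype.card ι)) : expand ℤ 2 (contract 2 c) = c := by
  refine map_injective (Int.castRingHom ℝ) Int.cast_injective ?_
  rw [map_expand, map_contract two_ne_zero]
  refine expand_contract_two_of_even fun y ↦ ?_
  simpa [eval_map, aeval_def, algebraMap_int_eq] using h.even hι y

theorem aeval_alexanderPoly_of_pos {m : ℕ} (hm : Fintype.card ι = 2 * m) {t : ℝ} (ht : 0 < t) :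
    aeval t (alexanderPoly V) = t ^ m * aeval ((t - 1) ^ 2 / t) (contract 2 c) := by
  set x := (√t)⁻¹ with hx_def
  have hs : √t ^ 2 = t := Real.sq_sqrt ht.le
  have hx : x ≠ 0 := inv_ne_zero (Real.sqrt_pos.mpr ht).ne'
  have hxt : x ^ 2 * t = 1 := by rw [hx_def, inv_pow, hs, inv_mul_cancel₀ ht.ne']
  have hw : (x - x⁻¹) ^ 2 = (t - 1) ^ 2 / t := by
    rw [hx_def, inv_inv]
    field_simp
    rw [hs]
    ring
  have key := h x hx
  rw [Matrix.det_smul_sub_inv_smul_transpose _ hxt, ← h.expand_contract ⟨m, by omega⟩,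
    expand_aeval, hw, hm, pow_mul] at key
  rw [_root_.aeval_alexanderPoly, ← key, ← mul_assoc, ← mul_pow, mul_comm t, hxt, one_pow,
    one_mul]

-- The right-hand side is `X ^ m * X ^ d * P ((X - 1) ^ 2 / X)` for `P = contract 2 c` of degree `d`.
theorem X_pow_mul_alexanderPoly {m : ℕ} (hm : Fintype.card ι = 2 * m) :
    X ^ (contract 2 c).natDegree * alexanderPoly V = X ^ m *
      MvPolynomial.aeval ![(X - 1) ^ 2, X] ((contract 2 c).homogenize (contract 2 c).natDegree) := by
  refine eq_of_forall_pos_aeval_eq fun t ht ↦ ?_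
  rw [map_mul, map_mul, map_pow, map_pow, aeval_X, h.aeval_alexanderPoly_of_pos hm ht,
    aeval_aeval_homogenize le_rfl _ _ (by simpa using ht.ne')]
  simp only [map_pow, map_sub, aeval_X, map_one]
  ring

theorem aeval_contract_eq_zero {m : ℕ} (hm : Fintype.card ι = 2 * m) {q : ℚ} (hq : q ≠ 0)
    (hroot : (V.map ((↑) : ℤ → ℚ) - q • (V.map ((↑) : ℤ → ℚ))ᵀ).det = 0) :
    aeval ((q - 1) ^ 2 / q) (contract 2 c) = 0 := by
  have hq' := congrArg (aeval q) (h.X_pow_mul_alexanderPoly hm)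
  rw [map_mul, map_mul, map_pow, map_pow, aeval_X, _root_.aeval_alexanderPoly, hroot, mul_zero,
    aeval_aeval_homogenize le_rfl _ _ (by simpa using hq)] at hq'
  simp only [map_pow, map_sub, aeval_X, map_one] at hq'
  simpa [hq] using hq'.symm

end IsConwayPoly

end Conway

theorem no_rational_root_of_nonneg_conway_general (n : ℕ)
    (V : Matrix (Fin n) (Fin n) ℤ)
    (hV : (V - Vᵀ).det = 1)
    (conway : Polynomial ℤ)
    (hpos : ∀ i, 0 ≤ conway.coeff i)
    (hconway : ∀ x : ℝ, x ≠ 0 →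
      (x • V.map ((↑) : ℤ → ℝ) - x⁻¹ • (V.map ((↑) : ℤ → ℝ))ᵀ).det =
        Polynomial.aeval (x - x⁻¹) conway) :
    ¬ ∃ q : ℚ, q ≠ 0 ∧
      (V.map ((↑) : ℤ → ℚ) - q • (V.map ((↑) : ℤ → ℚ))ᵀ).det = 0 := by
  rintro ⟨q, hq, hroot⟩
  have hc : IsConwayPoly V conway := hconway
  obtain ⟨m, hm⟩ := even_iff_exists_two_mul.mp
    (Matrix.even_card_of_det_sub_transpose_ne_zero (hV.trans_ne one_ne_zero))
  have hP0 : (contract 2 conway).coeff 0 = 1 := by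
    rw [coeff_contract two_ne_zero, zero_mul, hc.coeff_zero, hV]
  have hw := hc.aeval_contract_eq_zero hm hq hroot
  rcases hq.lt_or_gt with hq_neg | hq_pos
  · have hw_le : (q - 1) ^ 2 / q ≤ -4 := by
      rw [div_le_iff_of_neg hq_neg]
      nlinarith [sq_nonneg (q + 1)]
    have hw_abs := abs_le_one_of_aeval_eq_zero_of_isUnit_coeff_zero (hP0 ▸ isUnit_one) hw
    linarith [(abs_le.mp hw_abs).1]
  · have hP_pos := one_le_aeval_of_coeff_nonneg
      (fun i ↦ (coeff_contract two_ne_zero conway i).symm ▸ hpos _) hP0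
      (by positivity : 0 ≤ (q - 1) ^ 2 / q)
    linarith

/-- Algebraic content of Corollary 5.2: if an integer matrix `V` with
`det(V - Vᵀ) = 1` (a Seifert matrix) admits a "Conway polynomial" `∇` with
nonnegative integer coefficients satisfying `det(x V - x⁻¹ Vᵀ) = ∇(x - x⁻¹)`
for all nonzero real `x`, then `det(V - t Vᵀ)` (the Alexander polynomial)
has no nonzero rational roots. -/
theorem no_rational_root_of_nonneg_conway (n : ℕ) (hn : 1 ≤ n)
    (V : Matrix (Fin n) (Fin n) ℤ)
    (hV : (V - Vᵀ).det = 1)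
    (conway : Polynomial ℤ)
    (hpos : ∀ i, 0 ≤ conway.coeff i)
    (hconway : ∀ x : ℝ, x ≠ 0 →
      (x • V.map ((↑) : ℤ → ℝ) - x⁻¹ • (V.map ((↑) : ℤ → ℝ))ᵀ).det =
        Polynomial.aeval (x - x⁻¹) conway) :
    ¬ ∃ q : ℚ, q ≠ 0 ∧
      (V.map ((↑) : ℤ → ℚ) - q • (V.map ((↑) : ℤ → ℚ))ᵀ).det = 0 :=
  no_rational_root_of_nonneg_conway_general n V hV conway hpos hconway
end

section
/- Let W be a finite-dimensional vector space over ℚ, let B : W × W → ℚ be a bilinear form, and let t : W → W be a linear endomorphism whose characteristic polynomial has no root in ℚ. Define μ : W × W → ℚ by μ(v, w) = B(t(v), w) + B(t(w), v). Suppose Λ is a nonzero t-invariant subspace of W (t(Λ) ⊆ Λ) that is totally isotropic for B (i.e., B(v, w) = 0 for all v, w ∈ Λ). Then every subspace P of W on which μ is positive definite (μ(u, u) > 0 for every nonzero u ∈ P) satisfies dim P ≤ dim W − 2, and every subspace N of W on which μ is negative definite (μ(u, u) < 0 for every nonzero u ∈ N) satisfies dim N ≤ dim W − 2. -/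
/-!
A nonzero invariant subspace `Λ` has dimension at least two, since an invariant line would be
spanned by an eigenvector of `t`, whose eigenvalue is a rational root of the characteristic
polynomial. As `t Λ ⊆ Λ` and `Λ` is totally isotropic, `μ(v, v) = 2 B(t v, v)` vanishes on `Λ`, so
a subspace on which `μ` is definite meets `Λ` only in `0`, which forces `dim P + dim Λ ≤ dim W`.
-/

namespace Module.End

variable {K V : Type*} [Field K] [AddCommGroup V] [Module K V] [FiniteDimensional K V]

theorem exists_isRoot_charpoly_of_invariant_of_finrank_eq_one (t : End K V)
    {Λ : Submodule K V} (hinv : ∀ v ∈ Λ, t v ∈ Λ) (hΛ : Module.finrank K Λ = 1) :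
    ∃ r : K, t.charpoly.IsRoot r := by
  obtain ⟨⟨v, hv⟩, hv0, hspan⟩ := finrank_eq_one_iff'.mp hΛ
  obtain ⟨c, hc⟩ := hspan ⟨t v, hinv v hv⟩
  have hvec : t.HasEigenvector c v :=
    ⟨mem_eigenspace_iff.mpr (congrArg Subtype.val hc).symm, fun h => hv0 (Subtype.ext h)⟩
  exact ⟨c, (hasEigenvalue_iff_isRoot_charpoly t c).mp (hasEigenvalue_of_hasEigenvector hvec)⟩

theorem two_le_finrank_of_invariant_of_forall_not_isRoot_charpoly (t : End K V)
    (hroot : ∀ r : K, ¬ t.charpoly.IsRoot r) {Λ : Submodule K V} (hΛ : Λ ≠ ⊥)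
    (hinv : ∀ v ∈ Λ, t v ∈ Λ) : 2 ≤ Module.finrank K Λ := by
  have hpos : 0 < Module.finrank K Λ :=
    Module.finrank_pos_iff.mpr (Submodule.nontrivial_iff_ne_bot.mpr hΛ)
  have hne_one : Module.finrank K Λ ≠ 1 := fun h => by
    obtain ⟨r, hr⟩ := exists_isRoot_charpoly_of_invariant_of_finrank_eq_one t hinv h
    exact hroot r hr
  omega

end Module.End

theorem Submodule.finrank_add_finrank_le_of_anisotropic_of_isotropic {K V R : Type*} [Field K]
    [AddCommGroup V] [Module K V] [FiniteDimensional K V] [Zero R] (q : V → R)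
    {S Λ : Submodule K V} (hS : ∀ u ∈ S, u ≠ 0 → q u ≠ 0) (hΛ : ∀ v ∈ Λ, q v = 0) :
    Module.finrank K S + Module.finrank K Λ ≤ Module.finrank K V := by
  refine Submodule.finrank_add_finrank_le_of_disjoint (Submodule.disjoint_def.mpr ?_)
  exact fun x hxS hxΛ => by_contra fun hx => hS x hxS hx (hΛ x hxΛ)

/-- Algebraic core of Proposition 5.4: if the characteristic polynomial of
`t` has no rational root and there is a nonzero `t`-invariant totally
`B`-isotropic subspace `Λ`, then every subspace on which the Milnor form
`μ(v, w) = B(t v, w) + B(t w, v)` is positive (resp. negative) definite has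
dimension at most `dim W - 2`. -/
theorem milnor_form_definite_subspace_bound (W : Type*)
    [AddCommGroup W] [Module ℚ W] [FiniteDimensional ℚ W]
    (B : W →ₗ[ℚ] W →ₗ[ℚ] ℚ) (t : W →ₗ[ℚ] W)
    (hroot : ∀ r : ℚ, ¬ (LinearMap.charpoly t).IsRoot r)
    (μ : W → W → ℚ)
    (hμ : ∀ v w : W, μ v w = B (t v) w + B (t w) v)
    (Λ : Submodule ℚ W) (hΛne : Λ ≠ ⊥)
    (hinv : ∀ v ∈ Λ, t v ∈ Λ)
    (hiso : ∀ v ∈ Λ, ∀ w ∈ Λ, B v w = 0) :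
    (∀ P : Submodule ℚ W, (∀ u ∈ P, u ≠ 0 → 0 < μ u u) →
        Module.finrank ℚ P ≤ Module.finrank ℚ W - 2) ∧
    (∀ N : Submodule ℚ W, (∀ u ∈ N, u ≠ 0 → μ u u < 0) →
        Module.finrank ℚ N ≤ Module.finrank ℚ W - 2) := by
  have hμΛ : ∀ v ∈ Λ, μ v v = 0 := fun v hv => by
    rw [hμ, hiso _ (hinv v hv) _ hv, add_zero]
  have hdimΛ : 2 ≤ Module.finrank ℚ Λ :=
    Module.End.two_le_finrank_of_invariant_of_forall_not_isRoot_charpoly t hroot hΛne hinv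
  have hbound : ∀ S : Submodule ℚ W, (∀ u ∈ S, u ≠ 0 → μ u u ≠ 0) →
      Module.finrank ℚ S ≤ Module.finrank ℚ W - 2 := fun S hS => by
    have := Submodule.finrank_add_finrank_le_of_anisotropic_of_isotropic (fun v => μ v v) hS hμΛ
    omega
  exact ⟨fun P hP => hbound P fun u hu hu0 => (hP u hu hu0).ne',
    fun N hN => hbound N fun u hu hu0 => (hN u hu hu0).ne⟩
end
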